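/- Let U, V, W be finite-dimensional ℂ-vector spaces with dim U = n ≥ 1, and let T : U → V ⊗ W be an injective linear map. Then bR(T) ≥ n − 1 + m(T), where m(T) = min over nonzero u ∈ U of rk(Tu). -/

import Mathlib

open scoped BigOperators

/-- `T` (viewed as a linear map `ℂⁿ → ℂᵖ ⊗ ℂᵐ`) is a sum of `r` maps of the
form `u ↦ f(u) v ⊗ w`, i.e. has rank at most `r`. -/
def rankLE {n p m : ℕ} (T : Fin n → Fin p → Fin m → ℂ) (r : ℕ) : Prop :=
  ∃ f : Fin r → Fin n → ℂ, ∃ v : Fin r → Fin p → ℂ, ∃ w : Fin r → Fin m → ℂ,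
    T = fun i j k => ∑ s, f s i * v s j * w s k

/-- The border rank: the least `r` such that `T` is a limit of maps of rank at
most `r`. -/
noncomputable def bRank {n p m : ℕ} (T : Fin n → Fin p → Fin m → ℂ) : ℕ :=
  sInf {r | T ∈ closure {S | rankLE S r}}

/-- A 2-tensor (matrix) is a sum of `r` decomposable tensors. -/
def mrankLE {p m : ℕ} (M : Fin p → Fin m → ℂ) (r : ℕ) : Prop :=
  ∃ v : Fin r → Fin p → ℂ, ∃ w : Fin r → Fin m → ℂ,
    M = fun j k => ∑ s, v s j * w s k

/-- The rank of a 2-tensor: the least `r` such that it is a sum of `r`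
decomposable tensors. -/
noncomputable def mrank {p m : ℕ} (M : Fin p → Fin m → ℂ) : ℕ :=
  sInf {r | mrankLE M r}

/-!
If `S = ∑_{s < r} f_s ⊗ v_s ⊗ w_s`, the first `n - 1` functionals `f_s` have a common zero `u`
on the unit sphere, and then `S u` is a sum of at most `r - (n - 1)` decomposable tensors. Matrices
of rank at most `k` form a closed set and the sphere is compact, so this survives the passage to a
limit `T` of such `S`. Injectivity of `T` rules out `r < n - 1`, where it would force `T u = 0`.
-/

theorem Matrix.isClosed_setOf_rank_le {𝕜 : Type*} [NontriviallyNormedField 𝕜] [CompleteSpace 𝕜]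
    {ι κ : Type*} [Fintype ι] [Fintype κ] (k : ℕ) :
    IsClosed {A : Matrix ι κ 𝕜 | A.rank ≤ k} := by
  classical
  let Φ : Matrix ι κ 𝕜 →ₗ[𝕜] (κ → 𝕜) →L[𝕜] (ι → 𝕜) :=
    LinearMap.toContinuousLinearMap.toLinearMap ∘ₗ Matrix.toLin'.toLinearMap
  have hΦ : {A : Matrix ι κ 𝕜 | A.rank ≤ k}
      = Φ ⁻¹' {f | ↑(k + 1) ≤ (f : (κ → 𝕜) →ₗ[𝕜] ι → 𝕜).rank}ᶜ := by
    ext A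
    have hrank : ((Φ A : (κ → 𝕜) →L[𝕜] ι → 𝕜) : (κ → 𝕜) →ₗ[𝕜] ι → 𝕜).rank = A.rank := by
      simp only [Φ, LinearMap.rank, LinearEquiv.comp_coe, LinearEquiv.coe_coe,
        LinearEquiv.trans_apply, LinearMap.coe_toContinuousLinearMap, Matrix.rank,
        Module.finrank_eq_rank]
      rfl
    simp only [Set.mem_ofPred_eq, Set.mem_preimage, Set.mem_compl_iff, not_le, hrank]
    norm_cast
    omega
  rw [hΦ]
  exact (isOpen_setOfPred_nat_le_rank (k + 1)).isClosed_compl.preimage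
    (LinearMap.continuous_of_finiteDimensional Φ)

theorem exists_norm_eq_one_apply_eq_zero_of_finrank_lt {𝕜 E F : Type*} [RCLike 𝕜]
    [NormedAddCommGroup E] [NormedSpace 𝕜 E] [FiniteDimensional 𝕜 E]
    [AddCommGroup F] [Module 𝕜 F] [FiniteDimensional 𝕜 F] (L : E →ₗ[𝕜] F)
    (h : Module.finrank 𝕜 F < Module.finrank 𝕜 E) : ∃ u, ‖u‖ = 1 ∧ L u = 0 := by
  obtain ⟨u, hu, hu0⟩ := Submodule.exists_mem_ne_zero_of_ne_bot (L.ker_ne_bot_of_finrank_lt h)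
  exact ⟨(‖u‖⁻¹ : 𝕜) • u, norm_smul_inv_norm hu0, L.ker.smul_mem _ hu⟩

theorem mrankLE_sum_of_card_le {p m k : ℕ} {ι : Type*} [Fintype ι] (v : ι → Fin p → ℂ)
    (w : ι → Fin m → ℂ) (h : Fintype.card ι ≤ k) :
    mrankLE (fun j c => ∑ s, v s j * w s c) k := by
  obtain ⟨e⟩ : Nonempty (ι ⊕ Fin (k - Fintype.card ι) ≃ Fin k) :=
    Fintype.card_eq.mp (by simp only [Fintype.card_sum, Fintype.card_fin]; omega)
  refine ⟨fun s => Sum.elim v 0 (e.symm s), fun s => Sum.elim w 0 (e.symm s), ?_⟩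
  funext j c
  rw [← e.sum_comp]
  simp [Fintype.sum_sum_type]

theorem mrankLE_iff_rank_le {p m k : ℕ} {M : Fin p → Fin m → ℂ} :
    mrankLE M k ↔ (Matrix.of M).rank ≤ k := by
  constructor
  · rintro ⟨v, w, rfl⟩
    have : Matrix.of (fun j c => ∑ s, v s j * w s c)
        = Matrix.of (fun j s => v s j) * Matrix.of w := by
      ext j c
      simp [Matrix.mul_apply]
    rw [this]
    exact (Matrix.rank_mul_le_left _ _).trans (Matrix.rank_le_width _)
  · intro h
    set C := Submodule.span ℂ (Set.range (Matrix.of M).col)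
    have hcol (c : Fin m) : (fun j => M j c) ∈ C := Submodule.subset_span ⟨c, rfl⟩
    let b := Module.finBasis ℂ C
    have hM : M = fun j c => ∑ s, (b s : Fin p → ℂ) j * b.repr ⟨_, hcol c⟩ s := by
      funext j c
      have := congrArg (fun z : C => (z : Fin p → ℂ) j) (b.sum_repr ⟨_, hcol c⟩)
      simp only [Submodule.coe_sum, Submodule.coe_smul, Finset.sum_apply, Pi.smul_apply,
        smul_eq_mul] at this
      rw [← this]
      exact Finset.sum_congr rfl fun s _ => mul_comm _ _
    rw [hM]
    refine mrankLE_sum_of_card_le _ _ ?_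
    rwa [Fintype.card_fin, ← Matrix.rank_eq_finrank_span_cols]

theorem isClosed_setOf_mrankLE (p m k : ℕ) :
    IsClosed {M : Fin p → Fin m → ℂ | mrankLE M k} := by
  simp only [mrankLE_iff_rank_le]
  exact Matrix.isClosed_setOf_rank_le k

def contract {n p m : ℕ} (T : Fin n → Fin p → Fin m → ℂ) (u : Fin n → ℂ) : Fin p → Fin m → ℂ :=
  fun j k => ∑ i, T i j k * u i

theorem continuous_contract (n p m : ℕ) :
    Continuous fun x : (Fin n → Fin p → Fin m → ℂ) × (Fin n → ℂ) => contract x.1 x.2 := by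
  unfold contract
  fun_prop

theorem contract_sum {n p m r : ℕ} (f : Fin r → Fin n → ℂ) (v : Fin r → Fin p → ℂ)
    (w : Fin r → Fin m → ℂ) (u : Fin n → ℂ) :
    contract (fun i j k => ∑ s, f s i * v s j * w s k) u
      = fun j k => ∑ s, (∑ i, f s i * u i) * v s j * w s k := by
  funext j k
  simp only [contract, Finset.sum_mul]
  rw [Finset.sum_comm]
  exact Finset.sum_congr rfl fun s _ => Finset.sum_congr rfl fun i _ => by ring

theorem exists_norm_eq_one_mrankLE_contract {n p m r : ℕ} (hn : 1 ≤ n)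
    {S : Fin n → Fin p → Fin m → ℂ} (hS : rankLE S r) :
    ∃ u : Fin n → ℂ, ‖u‖ = 1 ∧ mrankLE (contract S u) (r - (n - 1)) := by
  obtain ⟨f, v, w, rfl⟩ := hS
  let killed (s : Fin r) : Prop := (s : ℕ) < n - 1
  have hkilled : Fintype.card {s // killed s} ≤ n - 1 := by
    simpa using Fintype.card_le_of_injective
      (fun s : {s // killed s} => (⟨s.1, s.2⟩ : Fin (n - 1)))
      fun s t h => Subtype.ext (Fin.ext (Fin.mk.inj h))
  have hkept : Fintype.card {s // ¬killed s} ≤ r - (n - 1) := by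
    simpa using Fintype.card_le_of_injective
      (fun s : {s // ¬killed s} => (⟨s.1 - (n - 1), by omega⟩ : Fin (r - (n - 1))))
      fun s t h => Subtype.ext (Fin.ext (by have := Fin.mk.inj h; omega))
  obtain ⟨u, hu, hker⟩ := exists_norm_eq_one_apply_eq_zero_of_finrank_lt
    (Matrix.of fun (s : {s // killed s}) i => f s i).mulVecLin
    (by simp only [Module.finrank_fintype_fun_eq_card, Fintype.card_fin]; omega)
  have hker' (s : {s // killed s}) : ∑ i, f s i * u i = 0 := congrFun hker s
  refine ⟨u, hu, ?_⟩
  rw [contract_sum, funext₂ fun j k => (Fintype.sum_subtype_add_sum_subtype killed _).symm]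
  simp only [hker', zero_mul, Finset.sum_const_zero, zero_add]
  exact mrankLE_sum_of_card_le (ι := {s // ¬killed s})
    (fun s j => (∑ i, f s i * u i) * v s j) (fun s => w s) hkept

theorem isClosed_setOf_exists_norm_eq_one_mrankLE_contract (n p m k : ℕ) :
    IsClosed {S : Fin n → Fin p → Fin m → ℂ |
      ∃ u : Fin n → ℂ, ‖u‖ = 1 ∧ mrankLE (contract S u) k} := by
  have hclosed : IsClosed {x : (Fin n → Fin p → Fin m → ℂ) × Metric.sphere (0 : Fin n → ℂ) 1 |
      mrankLE (contract x.1 x.2) k} :=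
    (isClosed_setOf_mrankLE p m k).preimage
      ((continuous_contract n p m).comp
        (continuous_fst.prodMk (continuous_subtype_val.comp continuous_snd)))
  convert isClosedMap_fst_of_compactSpace _ hclosed using 1
  ext S
  simp

theorem rankLE_mul {n p m : ℕ} (T : Fin n → Fin p → Fin m → ℂ) : rankLE T (n * p) := by
  let e := finProdFinEquiv (m := n) (n := p)
  refine ⟨fun s => Pi.single (e.symm s).1 1, fun s => Pi.single (e.symm s).2 1,
    fun s => T (e.symm s).1 (e.symm s).2, ?_⟩
  funext i j k
  rw [← e.sum_comp]
  simp [Fintype.sum_prod_type, Pi.single_apply]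

theorem eq_zero_of_mrankLE_zero {p m : ℕ} {M : Fin p → Fin m → ℂ} (h : mrankLE M 0) :
    M = 0 := by
  obtain ⟨v, w, rfl⟩ := h
  funext j k
  simp

/-- for an injective linear map `T : U → V ⊗ W` with
`dim U = n ≥ 1`, `bR(T) ≥ n − 1 + m(T)`, where
`m(T) = min { rk(Tu) : 0 ≠ u ∈ U }`. -/
theorem stmt10 {n p m : ℕ} (hn : 1 ≤ n) (T : Fin n → Fin p → Fin m → ℂ)
    (hT : Function.Injective
      (fun x : Fin n → ℂ => fun j k => ∑ i, T i j k * x i)) :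
    n - 1 + sInf {r | ∃ u : Fin n → ℂ, u ≠ 0 ∧
        r = mrank (fun j k => ∑ i, T i j k * u i)} ≤ bRank T := by
  set k := bRank T
  have hT_mem : T ∈ closure {S | rankLE S k} :=
    Nat.sInf_mem (s := {r | T ∈ closure {S | rankLE S r}})
      ⟨_, subset_closure (rankLE_mul T)⟩
  obtain ⟨u, hu, hTu⟩ : ∃ u : Fin n → ℂ, ‖u‖ = 1 ∧ mrankLE (contract T u) (k - (n - 1)) :=
    closure_minimal (fun S hS => exists_norm_eq_one_mrankLE_contract hn hS)
      (isClosed_setOf_exists_norm_eq_one_mrankLE_contract n p m _) hT_mem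
  have hu0 : u ≠ 0 := by
    rintro rfl
    simp at hu
  have hnk : n - 1 ≤ k := by
    by_contra! hlt
    rw [Nat.sub_eq_zero_of_le hlt.le] at hTu
    exact hu0 (hT ((eq_zero_of_mrankLE_zero hTu).trans (by funext j k; simp)))
  have hmrank : mrank (contract T u) ≤ k - (n - 1) := Nat.sInf_le hTu
  have hmin : sInf {r | ∃ u : Fin n → ℂ, u ≠ 0 ∧ r = mrank (fun j k => ∑ i, T i j k * u i)}
      ≤ mrank (contract T u) := Nat.sInf_le ⟨u, hu0, rfl⟩
  omega
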